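/- arXiv:1910.12972 — 3 statements merged into one kernel-verified Lean document; each statement's English description precedes it below -/
import Mathlib

section
/- Let S be a finite set, p : S → ℝ with p s ≥ 0 for all s and Σ_{s ∈ S} p s = 1, r : S → ℝ, and α ∈ (0,1]. Suppose q ∈ ℝ satisfies Σ_{s : r s ≥ q} p s = α. Then F(q) = α⁻¹ · Σ_{s : r s ≥ q} p s · r s (i.e., F(q) equals the conditional expectation E[R | R ≥ q]), and q minimizes F over ℝ, where F(b) = b + α⁻¹ · Σ_{s ∈ S} p s · max (r s − b) 0. Consequently the minimum of F equals the Conditional Value-at-Risk CVaR_α(R) = E[R : R ≥ VaR_α(R)]. -/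
open scoped Classical

/-! The map `x ↦ max (x - b) 0` is convex in `b`, and `-1[q ≤ x]` is a subgradient of it at
`q`. Weighting these subgradient inequalities by `p` and summing, the tail mass `α` of `q`
turns them into `F(b) ≥ F(q)`; at `b = q` the positive parts are just `r - q` on the tail,
which gives the conditional tail expectation. -/

theorem max_sub_zero_add_mul_indicator_le (x q b : ℝ) :
    max (x - q) 0 + (q - b) * (if q ≤ x then 1 else 0) ≤ max (x - b) 0 := by
  split_ifs with h
  · rw [max_eq_left (sub_nonneg.mpr h)]
    linarith [le_max_left (x - b) 0]
  · rw [max_eq_right (by linarith [not_le.mp h])]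
    simp

section WeightedSums

variable {ι : Type*} (s : Finset ι) (p r : ι → ℝ)

theorem sum_mul_max_sub_zero_eq (q : ℝ) :
    ∑ i ∈ s, p i * max (r i - q) 0
      = ∑ i ∈ s.filter (fun i => q ≤ r i), p i * r i
          - q * ∑ i ∈ s.filter (fun i => q ≤ r i), p i := by
  rw [Finset.mul_sum, ← Finset.sum_sub_distrib, Finset.sum_filter]
  refine Finset.sum_congr rfl fun i _ => ?_
  split_ifs with h
  · rw [max_eq_left (sub_nonneg.mpr h)]
    ring
  · rw [max_eq_right (by linarith [not_le.mp h])]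
    ring

theorem sum_mul_max_sub_zero_add_le (hp : ∀ i ∈ s, 0 ≤ p i) (q b : ℝ) :
    ∑ i ∈ s, p i * max (r i - q) 0 + (q - b) * ∑ i ∈ s.filter (fun i => q ≤ r i), p i
      ≤ ∑ i ∈ s, p i * max (r i - b) 0 := by
  rw [Finset.sum_filter, Finset.mul_sum, ← Finset.sum_add_distrib]
  refine Finset.sum_le_sum fun i hi => ?_
  have key := mul_le_mul_of_nonneg_left (max_sub_zero_add_mul_indicator_le (r i) q b) (hp i hi)
  split_ifs at key ⊢ <;> linarith

end WeightedSums

theorem RU_at_quantile_eq_cvar_and_minimizes_general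
    (S : Type*) [Fintype S]
    (p r : S → ℝ) (hp : ∀ s, 0 ≤ p s)
    (α : ℝ) (hα0 : 0 < α)
    (q : ℝ) (hq : ∑ s ∈ Finset.univ.filter (fun s => q ≤ r s), p s = α) :
    (q + α⁻¹ * ∑ s, p s * max (r s - q) 0
        = α⁻¹ * ∑ s ∈ Finset.univ.filter (fun s => q ≤ r s), p s * r s)
    ∧
    (∀ b : ℝ,
      q + α⁻¹ * ∑ s, p s * max (r s - q) 0
        ≤ b + α⁻¹ * ∑ s, p s * max (r s - b) 0) := by
  refine ⟨?_, fun b => ?_⟩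
  · rw [sum_mul_max_sub_zero_eq, hq]
    field_simp
    ring
  · have hsub := sum_mul_max_sub_zero_add_le Finset.univ p r (fun s _ => hp s) q b
    rw [hq] at hsub
    have hscaled := mul_le_mul_of_nonneg_left hsub (inv_nonneg.mpr hα0.le)
    rw [mul_add, mul_left_comm, inv_mul_cancel₀ hα0.ne', mul_one] at hscaled
    linarith

/-- If `q` is an exact upper `α`-quantile of the load-shedding distribution
(`Σ_{s : r s ≥ q} p s = α`), then the Rockafellar–Uryasev function
`F(b) = b + α⁻¹ Σ_s p s · max (r s − b) 0` satisfies
`F(q) = α⁻¹ Σ_{s : r s ≥ q} p s · r s` (the conditional tail expectation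
`E[R | R ≥ q]`, i.e. `CVaR_α`), and `q` minimizes `F` over ℝ. -/
theorem RU_at_quantile_eq_cvar_and_minimizes
    (S : Type*) [Fintype S]
    (p r : S → ℝ) (hp : ∀ s, 0 ≤ p s) (hsum : ∑ s, p s = 1)
    (α : ℝ) (hα0 : 0 < α) (hα1 : α ≤ 1)
    (q : ℝ) (hq : ∑ s ∈ Finset.univ.filter (fun s => q ≤ r s), p s = α) :
    (q + α⁻¹ * ∑ s, p s * max (r s - q) 0
        = α⁻¹ * ∑ s ∈ Finset.univ.filter (fun s => q ≤ r s), p s * r s)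
    ∧
    (∀ b : ℝ,
      q + α⁻¹ * ∑ s, p s * max (r s - q) 0
        ≤ b + α⁻¹ * ∑ s, p s * max (r s - b) 0) :=
  RU_at_quantile_eq_cvar_and_minimizes_general S p r hp α hα0 q hq
end

section
/- Let S be a finite set, p : S → ℝ with p s ≥ 0 for all s, D ≥ 0, V̄ ≥ 0, α ∈ ℝ, and r : S → ℝ with 0 ≤ r s ≤ D for all s. Then there exists φ : S → {0,1} satisfying r s − D · φ s ≤ V̄ for all s and Σ_{s ∈ S} p s · φ s ≤ α, if and only if Σ_{s : r s > V̄} p s ≤ α. (This establishes the correctness of the mixed-integer formulation of the VaR constraint: the binary variables can be chosen feasibly exactly when the probability of load shedding exceeding V̄ is at most α.) -/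
/-!
Since `r s - D ≤ 0 ≤ V̄`, flagging a state is always allowed, so for binary `φ` the constraint
`r s - D φ s ≤ V̄` says exactly that every state with `r s > V̄` is flagged. The cheapest feasible
`φ` is therefore the indicator of `{s | V̄ < r s}`, whose weight is the probability on the right.
-/

open Finset

lemma sub_mul_le_iff_of_binary {r D V x : ℝ} (hV : 0 ≤ V) (hrD : r ≤ D) (hx : x = 0 ∨ x = 1) :
    r - D * x ≤ V ↔ (V < r → x = 1) := by
  rcases hx with rfl | rfl
  · simp
  · exact iff_of_true (by linarith) fun _ => rfl

lemma sum_filter_le_sum_mul {ι : Type*} [Fintype ι] {P : ι → Prop} [DecidablePred P]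
    {p φ : ι → ℝ} (hp : ∀ i, 0 ≤ p i) (hφ : ∀ i, 0 ≤ φ i) (hP : ∀ i, P i → 1 ≤ φ i) :
    ∑ i ∈ univ.filter P, p i ≤ ∑ i, p i * φ i :=
  calc ∑ i ∈ univ.filter P, p i
      ≤ ∑ i ∈ univ.filter P, p i * φ i :=
        sum_le_sum fun i hi => le_mul_of_one_le_right (hp i) (hP i (mem_filter.1 hi).2)
    _ ≤ ∑ i, p i * φ i :=
        sum_le_sum_of_subset_of_nonneg (filter_subset _ _) fun i _ _ => mul_nonneg (hp i) (hφ i)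

theorem var_mip_correct_general
    (S : Type*) [Fintype S]
    (p : S → ℝ) (hp : ∀ s, 0 ≤ p s)
    (D : ℝ) (Vbar : ℝ) (hV : 0 ≤ Vbar) (α : ℝ)
    (r : S → ℝ) (hrD : ∀ s, r s ≤ D) :
    (∃ φ : S → ℝ, (∀ s, φ s = 0 ∨ φ s = 1) ∧
        (∀ s, r s - D * φ s ≤ Vbar) ∧
        ∑ s, p s * φ s ≤ α)
      ↔
    ∑ s ∈ Finset.univ.filter (fun s => Vbar < r s), p s ≤ α := by
  constructor
  · rintro ⟨φ, hφ01, hφV, hφα⟩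
    have hφ_nonneg (s : S) : 0 ≤ φ s := by rcases hφ01 s with h | h <;> simp [h]
    have hφ_tail (s : S) (hs : Vbar < r s) : 1 ≤ φ s :=
      ((sub_mul_le_iff_of_binary hV (hrD s) (hφ01 s)).1 (hφV s) hs).ge
    exact (sum_filter_le_sum_mul hp hφ_nonneg hφ_tail).trans hφα
  · intro h
    have hbinary (s : S) : (if Vbar < r s then (1 : ℝ) else 0) = 0 ∨
        (if Vbar < r s then (1 : ℝ) else 0) = 1 := by
      split_ifs <;> simp
    refine ⟨fun s => if Vbar < r s then 1 else 0, hbinary,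
      fun s => (sub_mul_le_iff_of_binary hV (hrD s) (hbinary s)).2 fun hs => if_pos hs, ?_⟩
    simpa [sum_filter, mul_ite] using h

/-- Correctness of the mixed-integer formulation of the VaR constraint:
binary variables `φ s ∈ {0,1}` with `r s − D·φ s ≤ V̄` and
`Σ_s p s · φ s ≤ α` exist if and only if the probability of load shedding
exceeding `V̄` is at most `α`. -/
theorem var_mip_correct
    (S : Type*) [Fintype S]
    (p : S → ℝ) (hp : ∀ s, 0 ≤ p s)
    (D : ℝ) (hD : 0 ≤ D) (Vbar : ℝ) (hV : 0 ≤ Vbar) (α : ℝ)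
    (r : S → ℝ) (hr0 : ∀ s, 0 ≤ r s) (hrD : ∀ s, r s ≤ D) :
    (∃ φ : S → ℝ, (∀ s, φ s = 0 ∨ φ s = 1) ∧
        (∀ s, r s - D * φ s ≤ Vbar) ∧
        ∑ s, p s * φ s ≤ α)
      ↔
    ∑ s ∈ Finset.univ.filter (fun s => Vbar < r s), p s ≤ α :=
  var_mip_correct_general S p hp D Vbar hV α r hrD
end

section
/- Let S be a finite set, J a finite index set, p : S → ℝ with p s ≥ 0 for all s, D ∈ ℝ, a : S → J → ℝ, and x⁰ : J → ℝ. Let Ω = { s ∈ S : D − Σ_{j ∈ J} a s j · x⁰ j > 0 } and define g : J → ℝ by g j = − Σ_{s ∈ Ω} p s · a s j. Then for every x : J → ℝ, EPNS(x) ≥ EPNS(x⁰) + Σ_{j ∈ J} g j · (x j − x⁰ j), where EPNS(x) = Σ_{s ∈ S} p s · max (D − Σ_{j ∈ J} a s j · x j) 0. That is, the vector of derivatives ∂EPNS/∂x_j = −Σ_{s ∈ Ω} p s ξ_j^s ḡ_j computed from the Monte Carlo states with load shedding is a subgradient of EPNS at x⁰, so the corresponding Benders feasibility cut is a valid linear under-estimator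 of EPNS. -/
open scoped Classical

/-! The positive part `t ↦ max t 0` is convex with subgradient `1` where `t₀ > 0` and `0`
elsewhere; composing with the affine maps `x ↦ D - ∑ j, a s j * x j` and summing with the
nonnegative weights `p s` gives a subgradient of EPNS, and the gradient term is a
regrouping of that sum. -/

open Finset

theorem max_zero_add_ite_pos_sub_le (t₀ t : ℝ) :
    max t₀ 0 + (if 0 < t₀ then t - t₀ else 0) ≤ max t 0 := by
  split_ifs with h
  · rw [max_eq_left h.le, add_sub_cancel]
    exact le_max_left t 0
  · rw [max_eq_right (not_lt.mp h), add_zero]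
    exact le_max_right t 0

theorem sum_mul_max_zero_add_sum_filter_pos_le {S : Type*} (T : Finset S) (p f₀ f : S → ℝ)
    (hp : ∀ s ∈ T, 0 ≤ p s) :
    ∑ s ∈ T, p s * max (f₀ s) 0 + ∑ s ∈ T with 0 < f₀ s, p s * (f s - f₀ s)
      ≤ ∑ s ∈ T, p s * max (f s) 0 := by
  rw [sum_filter, ← sum_add_distrib]
  refine sum_le_sum fun s hs => ?_
  have h := mul_le_mul_of_nonneg_left (max_zero_add_ite_pos_sub_le (f₀ s) (f s)) (hp s hs)
  rwa [mul_add, mul_ite, mul_zero] at h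

theorem sum_neg_sum_mul_sub_eq_sum_mul_sub {S J : Type*} [Fintype J] (Ω : Finset S)
    (p : S → ℝ) (D : ℝ) (a : S → J → ℝ) (x₀ x : J → ℝ) :
    ∑ j, (-∑ s ∈ Ω, p s * a s j) * (x j - x₀ j)
      = ∑ s ∈ Ω, p s * ((D - ∑ j, a s j * x j) - (D - ∑ j, a s j * x₀ j)) := by
  simp only [sub_sub_sub_cancel_left, ← sum_sub_distrib, mul_sum, neg_mul, sum_mul,
    ← sum_neg_distrib]
  rw [sum_comm]
  exact sum_congr rfl fun s _ => sum_congr rfl fun j _ => by ring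

/-- The vector `g j = −Σ_{s ∈ Ω} p s · a s j`, computed from the set `Ω` of
states with positive load shedding at the trial plan `x⁰`, is a subgradient
of `EPNS(x) = Σ_s p s · max (D − Σ_j a s j · x j) 0` at `x⁰`:
the corresponding Benders cut is a valid linear under-estimator of EPNS. -/
theorem epns_subgradient_cut_valid
    (S J : Type*) [Fintype S] [Fintype J]
    (p : S → ℝ) (hp : ∀ s, 0 ≤ p s)
    (D : ℝ) (a : S → J → ℝ) (x0 : J → ℝ) :
    ∀ x : J → ℝ,
      ∑ s, p s * max (D - ∑ j, a s j * x j) 0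
        ≥ (∑ s, p s * max (D - ∑ j, a s j * x0 j) 0)
          + ∑ j, (-∑ s ∈ Finset.univ.filter
                (fun s => 0 < D - ∑ j', a s j' * x0 j'), p s * a s j)
              * (x j - x0 j) := by
  intro x
  rw [ge_iff_le, sum_neg_sum_mul_sub_eq_sum_mul_sub _ p D a x0 x]
  exact sum_mul_max_zero_add_sum_filter_pos_le univ p _ _ fun s _ => hp s
end
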